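/- The calculi satisfy the disjunction property under disjunction-free contexts: if the sequent Γ ⇒ φ ∨ ψ is derivable with height n in one of the cut-free calculi G3-N, G3-NeF, G3-CoPC, G3-MPC, and no formula in Γ contains a disjunction as a subformula, then Γ ⇒ φ or Γ ⇒ ψ is derivable with height at most n. -/
import Mathlib


inductive Fml where
  | var : Nat → Fml
  | top : Fml
  | and : Fml → Fml → Fml
  | or  : Fml → Fml → Fml
  | imp : Fml → Fml → Fml
  | neg : Fml → Fml
deriving DecidableEq

/-- Names for the four possible negation rules. -/
inductive NegRule where
  | n | nef | copc | an
deriving DecidableEq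

/-- `Der R Γ φ k`: the sequent `Γ ⇒ φ` is derivable with height at most `k`
in the G3 calculus whose negation rules are those satisfying `R`.
Axioms are available at every height; each rule adds one to the height. -/
inductive Der (R : NegRule → Prop) : Multiset Fml → Fml → Nat → Prop where
  | ax (Γ : Multiset Fml) (p k) : Der R (Fml.var p ::ₘ Γ) (Fml.var p) k
  | top (Γ : Multiset Fml) (k) : Der R Γ Fml.top k
  | andR {Γ α β k} : Der R Γ α k → Der R Γ β k → Der R Γ (Fml.and α β) (k+1)
  | andL {Γ α β φ k} : Der R (α ::ₘ β ::ₘ Γ) φ k → Der R (Fml.and α β ::ₘ Γ) φ (k+1)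
  | orR1 {Γ α β k} : Der R Γ α k → Der R Γ (Fml.or α β) (k+1)
  | orR2 {Γ α β k} : Der R Γ β k → Der R Γ (Fml.or α β) (k+1)
  | orL {Γ α β φ k} : Der R (α ::ₘ Γ) φ k → Der R (β ::ₘ Γ) φ k →
      Der R (Fml.or α β ::ₘ Γ) φ (k+1)
  | impR {Γ α β k} : Der R (α ::ₘ Γ) β k → Der R Γ (Fml.imp α β) (k+1)
  | impL {Γ α β φ k} : Der R (Fml.imp α β ::ₘ Γ) α k → Der R (β ::ₘ Γ) φ k →
      Der R (Fml.imp α β ::ₘ Γ) φ (k+1)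
  | nrule {Γ α β k} : R NegRule.n → Der R (β ::ₘ Fml.neg α ::ₘ Γ) α k →
      Der R (α ::ₘ Fml.neg α ::ₘ Γ) β k → Der R (Fml.neg α ::ₘ Γ) (Fml.neg β) (k+1)
  | nef {Γ α β k} : R NegRule.nef → Der R (Fml.neg α ::ₘ Γ) α k →
      Der R (Fml.neg α ::ₘ Γ) (Fml.neg β) (k+1)
  | copc {Γ α β k} : R NegRule.copc → Der R (β ::ₘ Fml.neg α ::ₘ Γ) α k →
      Der R (Fml.neg α ::ₘ Γ) (Fml.neg β) (k+1)
  | an {Γ α k} : R NegRule.an → Der R (α ::ₘ Γ) (Fml.neg α) k → Der R Γ (Fml.neg α) (k+1)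

/-- The calculus G3-N. -/
def NCalc : NegRule → Prop := fun r => r = NegRule.n
/-- The calculus G3-NeF. -/
def NeFCalc : NegRule → Prop := fun r => r = NegRule.nef
/-- The calculus G3-CoPC. -/
def CoPCCalc : NegRule → Prop := fun r => r = NegRule.copc
/-- The calculus G3-MPC (contraposition plus (AN)). -/
def MPCCalc : NegRule → Prop := fun r => r = NegRule.copc ∨ r = NegRule.an

/-- Derivability (at some height). -/
def Derivable (R : NegRule → Prop) (Γ : Multiset Fml) (φ : Fml) : Prop := ∃ k, Der R Γ φ k

/-- A formula contains no disjunction as a subformula. -/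
def Fml.disjFree : Fml → Prop
  | Fml.var _ => True
  | Fml.top => True
  | Fml.and a b => a.disjFree ∧ b.disjFree
  | Fml.or _ _ => False
  | Fml.imp a b => a.disjFree ∧ b.disjFree
  | Fml.neg a => a.disjFree

private theorem der_succ {R : NegRule → Prop} {Γ φ k} (h : Der R Γ φ k) :
    Der R Γ φ (k+1) := by
  induction h with
  | ax => exact Der.ax _ _ _
  | top => exact Der.top _ _
  | andR _ _ ih1 ih2 => exact Der.andR ih1 ih2
  | andL _ ih => exact Der.andL ih
  | orR1 _ ih => exact Der.orR1 ih
  | orR2 _ ih => exact Der.orR2 ih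
  | orL _ _ ih1 ih2 => exact Der.orL ih1 ih2
  | impR _ ih => exact Der.impR ih
  | impL _ _ ih1 ih2 => exact Der.impL ih1 ih2
  | nrule hr _ _ ih1 ih2 => exact Der.nrule hr ih1 ih2
  | nef hr _ ih => exact Der.nef hr ih
  | copc hr _ ih => exact Der.copc hr ih
  | an hr _ ih => exact Der.an hr ih

private theorem der_mono {R : NegRule → Prop} {Γ φ k m} (hk : k ≤ m)
    (h : Der R Γ φ k) : Der R Γ φ m := by
  induction hk with
  | refl => exact h
  | step _ ih => exact der_succ ih

private theorem dp_aux {R : NegRule → Prop} {Γ χ n} (h : Der R Γ χ n) :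
    ∀ φ ψ, χ = Fml.or φ ψ → (∀ γ ∈ Γ, γ.disjFree) →
      Der R Γ φ n ∨ Der R Γ ψ n := by
  induction h with
  | ax => intro φ ψ h; exact absurd h (by simp)
  | top => intro φ ψ h; exact absurd h (by simp)
  | andR => intro φ ψ h; exact absurd h (by simp)
  | andL hp ih =>
    intro φ ψ heq hdf
    have hab := hdf _ (Multiset.mem_cons_self _ _)
    obtain ⟨ha, hb⟩ := hab
    have key := ih φ ψ heq (by
      intro γ hγ
      rcases Multiset.mem_cons.mp hγ with rfl | hγ
      · exact ha
      · rcases Multiset.mem_cons.mp hγ with rfl | hγ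
        · exact hb
        · exact hdf _ (Multiset.mem_cons_of_mem hγ))
    rcases key with h | h
    · exact Or.inl (Der.andL h)
    · exact Or.inr (Der.andL h)
  | orR1 hp _ =>
    intro φ ψ heq _
    obtain ⟨rfl, rfl⟩ : _ ∧ _ := by injection heq with h1 h2; exact ⟨h1, h2⟩
    exact Or.inl (der_succ hp)
  | orR2 hp _ =>
    intro φ ψ heq _
    obtain ⟨rfl, rfl⟩ : _ ∧ _ := by injection heq with h1 h2; exact ⟨h1, h2⟩
    exact Or.inr (der_succ hp)
  | orL =>
    intro φ ψ _ hdf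
    exact absurd (hdf _ (Multiset.mem_cons_self _ _)) (by simp [Fml.disjFree])
  | impR => intro φ ψ h; exact absurd h (by simp)
  | impL h1 _ _ ih2 =>
    intro φ ψ heq hdf
    have hab := hdf _ (Multiset.mem_cons_self _ _)
    obtain ⟨_, hb⟩ := hab
    have key := ih2 φ ψ heq (by
      intro γ hγ
      rcases Multiset.mem_cons.mp hγ with rfl | hγ
      · exact hb
      · exact hdf _ (Multiset.mem_cons_of_mem hγ))
    rcases key with h | h
    · exact Or.inl (Der.impL h1 h)
    · exact Or.inr (Der.impL h1 h)
  | nrule => intro φ ψ h; exact absurd h (by simp)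
  | nef => intro φ ψ h; exact absurd h (by simp)
  | copc => intro φ ψ h; exact absurd h (by simp)
  | an => intro φ ψ h; exact absurd h (by simp)

/-- Disjunction property under disjunction-free contexts, for each of the
four calculi, with height preserved. -/
theorem disjunction_property :
    ∀ (C : NegRule → Prop),
      (C = NCalc ∨ C = NeFCalc ∨ C = CoPCCalc ∨ C = MPCCalc) →
      ∀ (Γ : Multiset Fml) (φ ψ : Fml) (n : Nat),
        Der C Γ (Fml.or φ ψ) n → (∀ γ ∈ Γ, γ.disjFree) →
        Der C Γ φ n ∨ Der C Γ ψ n := by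
  intro C _ Γ φ ψ n h hdf
  exact dp_aux h φ ψ rfl hdf
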